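/- Let M = ℂ³ with coordinates (t₁,t₂,t₃), and define a commutative multiplication on the tangent bundle by e = ∂₁ as unit, ∂₂∘∂₂ = f·∂₃, ∂₂∘∂₃ = 0, ∂₃∘∂₃ = 0, where f ∈ ℂ{t₂,t₃}. Then this multiplication is associative, and the ideal I = (y₁ − 1, y₂² − f·y₃, y₂y₃, y₃²) satisfies {I, I} ⊆ I, so (M, ∘, e) is an F-manifold. -/

import Mathlib

/-!
Associativity is a polynomial identity in the components. For the ideal, both the
coefficientwise `∂/∂tⱼ` and `∂/∂yₖ` are derivations of `ℂ{t₂,t₃}[y₁,y₂,y₃]`, so the Poisson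
bracket is a biderivation and closure of `I` reduces to brackets of generators. Only
`g₂ = y₂² − f y₃` depends on `t`, with `∂g₂/∂tⱼ = −(∂f/∂tⱼ) y₃`; hence up to sign the only
nonzero brackets are `{g₂, g} = −Σ_{j=2,3} (∂f/∂tⱼ) y₃ ∂g/∂yⱼ` for `g ∈ {y₁ − 1, y₂y₃, y₃²}`,
and `y₃ ∂g/∂y₂`, `y₃ ∂g/∂y₃` lie in `(y₂y₃, y₃²) ⊆ I`.
-/
noncomputable section

abbrev Rts : Type := MvPowerSeries (Fin 2) ℂ

/-- partial derivative ∂/∂tⱼ on power series in (t₂,t₃) -/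
def pderivPS (j : Fin 2) (f : Rts) : Rts :=
  fun m => ((m j : ℂ) + 1) * f (m + Finsupp.single j 1)

abbrev Sy : Type := MvPolynomial (Fin 3) Rts

/-- apply ∂/∂tⱼ to the coefficients of a polynomial in (y₁,y₂,y₃) -/
def Dt (j : Fin 2) (f : Sy) : Sy :=
  f.support.sum (fun m => MvPolynomial.monomial m (pderivPS j (MvPolynomial.coeff m f)))

/-- Poisson bracket `{f,g} = Σₖ (∂f/∂tₖ ∂g/∂yₖ − ∂f/∂yₖ ∂g/∂tₖ)` (`t₁`-derivatives vanish);
`tₖ` for `k ∈ {2,3}` corresponds to the `y`-variable of index `k`. -/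
def poisson (f g : Sy) : Sy :=
  ∑ j : Fin 2,
    (Dt j f * MvPolynomial.pderiv j.succ g
      - MvPolynomial.pderiv j.succ f * Dt j g)

/-- The multiplication on vector fields `X₁∂₁ + X₂∂₂ + X₃∂₃` (components in
`ℂ{t₂,t₃}`) determined by the unit `e = ∂₁` and
`∂₂∘∂₂ = f·∂₃`, `∂₂∘∂₃ = 0`, `∂₃∘∂₃ = 0`. -/
def fMul (f : Rts) (x y : Rts × Rts × Rts) : Rts × Rts × Rts :=
  (x.1 * y.1,
   x.1 * y.2.1 + x.2.1 * y.1,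
   x.1 * y.2.2 + x.2.2 * y.1 + f * (x.2.1 * y.2.1))

namespace Derivation

variable {σ A R : Type*} [CommSemiring A] [CommSemiring R] [Algebra A R]

def mvPolynomialMapCoeffs (D : Derivation A R R) :
    Derivation A (MvPolynomial σ R) (MvPolynomial σ R) where
  toFun p := AddMonoidAlgebra.map (D : R →ₗ[A] R).toAddMonoidHom p
  map_add' p q := by ext m; simp
  map_smul' a p := by ext m; simp
  map_one_eq_zero' := by
    classical
    ext m
    simp [MvPolynomial.coeff_one, apply_ite D]
  leibniz' p q := by
    classical
    ext m
    simp [MvPolynomial.coeff_mul, Finset.sum_add_distrib,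
      Finsupp.sum_antidiagonal_swap m fun a b => MvPolynomial.coeff a q * D (MvPolynomial.coeff b p)]

@[simp]
theorem coeff_mvPolynomialMapCoeffs (D : Derivation A R R) (p : MvPolynomial σ R) (m : σ →₀ ℕ) :
    (D.mvPolynomialMapCoeffs p).coeff m = D (p.coeff m) :=
  rfl

@[simp]
theorem mvPolynomialMapCoeffs_C (D : Derivation A R R) (r : R) :
    D.mvPolynomialMapCoeffs (MvPolynomial.C r : MvPolynomial σ R) = MvPolynomial.C (D r) := by
  classical
  ext m
  simp [MvPolynomial.coeff_C, apply_ite D]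

@[simp]
theorem mvPolynomialMapCoeffs_X (D : Derivation A R R) (i : σ) :
    D.mvPolynomialMapCoeffs (MvPolynomial.X i : MvPolynomial σ R) = 0 := by
  classical
  ext m
  simp [MvPolynomial.coeff_X, apply_ite D]

end Derivation

theorem pderivPS_eq_pderiv (j : Fin 2) : pderivPS j = MvPowerSeries.pderiv ℂ j := by
  funext g
  ext m
  rw [MvPowerSeries.coeff_pderiv, mul_comm]
  rfl

theorem Dt_eq_mvPolynomialMapCoeffs (j : Fin 2) :
    Dt j = (MvPowerSeries.pderiv ℂ j).mvPolynomialMapCoeffs := by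
  classical
  funext g
  ext m : 1
  by_cases h : g.coeff m = 0 <;>
    simp [Dt, MvPolynomial.coeff_sum, MvPolynomial.coeff_monomial, pderivPS_eq_pderiv, h]

theorem Ideal.bracket_mem_span_of_leibniz {S : Type*} [CommRing S] (B : S → S → S)
    (add_left : ∀ a b c, B (a + b) c = B a c + B b c)
    (add_right : ∀ a b c, B a (b + c) = B a b + B a c)
    (mul_left : ∀ a b c, B (a * b) c = a * B b c + b * B a c)
    (mul_right : ∀ a b c, B a (b * c) = b * B a c + c * B a b)
    {s : Set S} (hs : ∀ x ∈ s, ∀ y ∈ s, B x y ∈ Ideal.span s)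
    {x y : S} (hx : x ∈ Ideal.span s) (hy : y ∈ Ideal.span s) : B x y ∈ Ideal.span s := by
  induction hx, hy using Submodule.span_induction₂ with
  | mem_mem x y hx hy => exact hs x hx y hy
  | zero_left y _ =>
    rw [show B 0 y = 0 by simpa using add_left 0 0 y]
    exact zero_mem _
  | zero_right x _ =>
    rw [show B x 0 = 0 by simpa using add_right x 0 0]
    exact zero_mem _
  | add_left x y z _ _ _ hxz hyz => rw [add_left]; exact add_mem hxz hyz
  | add_right x y z _ _ _ hxy hxz => rw [add_right]; exact add_mem hxy hxz
  | smul_left r x y hx _ h =>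
    rw [smul_eq_mul, mul_left]
    exact add_mem (Ideal.mul_mem_left _ r h) (Ideal.mul_mem_right _ _ hx)
  | smul_right r x y _ hy h =>
    rw [smul_eq_mul, mul_right]
    exact add_mem (Ideal.mul_mem_left _ r h) (Ideal.mul_mem_right _ _ hy)

theorem fMul_assoc (f : Rts) (x y z : Rts × Rts × Rts) :
    fMul f (fMul f x y) z = fMul f x (fMul f y z) := by
  simp only [fMul, Prod.mk.injEq]
  exact ⟨by ring, by ring, by ring⟩

section Poisson

open MvPolynomial

theorem poisson_add_left (a b c : Sy) : poisson (a + b) c = poisson a c + poisson b c := by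
  simp only [poisson, Dt_eq_mvPolynomialMapCoeffs, map_add, ← Finset.sum_add_distrib]
  exact Finset.sum_congr rfl fun _ _ => by ring

theorem poisson_add_right (a b c : Sy) : poisson a (b + c) = poisson a b + poisson a c := by
  simp only [poisson, Dt_eq_mvPolynomialMapCoeffs, map_add, ← Finset.sum_add_distrib]
  exact Finset.sum_congr rfl fun _ _ => by ring

theorem poisson_mul_left (a b c : Sy) :
    poisson (a * b) c = a * poisson b c + b * poisson a c := by
  simp only [poisson, Dt_eq_mvPolynomialMapCoeffs, Derivation.leibniz, smul_eq_mul,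
    Finset.mul_sum, ← Finset.sum_add_distrib]
  exact Finset.sum_congr rfl fun _ _ => by ring

theorem poisson_mul_right (a b c : Sy) :
    poisson a (b * c) = b * poisson a c + c * poisson a b := by
  simp only [poisson, Dt_eq_mvPolynomialMapCoeffs, Derivation.leibniz, smul_eq_mul,
    Finset.mul_sum, ← Finset.sum_add_distrib]
  exact Finset.sum_congr rfl fun _ _ => by ring

theorem poisson_self (a : Sy) : poisson a a = 0 := by
  simp [poisson, mul_comm]

theorem poisson_swap (a b : Sy) : poisson b a = -poisson a b := by
  simp only [poisson, ← Finset.sum_neg_distrib]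
  exact Finset.sum_congr rfl fun _ _ => by ring

theorem poisson_eq_sum_of_Dt_eq_zero {a b : Sy} (hb : ∀ j, Dt j b = 0) :
    poisson a b = ∑ j, Dt j a * pderiv j.succ b := by
  simp [poisson, hb]

def spectralGenerators (f : Rts) : Set Sy :=
  {X 0 - 1, X 1 ^ 2 - C f * X 2, X 1 * X 2, X 2 ^ 2}

theorem Dt_spectralGenerator (f : Rts) (j : Fin 2) :
    Dt j (X 1 ^ 2 - C f * X 2) = -C (pderivPS j f) * X 2 := by
  simp only [Dt_eq_mvPolynomialMapCoeffs, map_sub, Derivation.leibniz, Derivation.leibniz_pow,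
    Derivation.mvPolynomialMapCoeffs_X, Derivation.mvPolynomialMapCoeffs_C, pderivPS_eq_pderiv,
    smul_eq_mul, nsmul_eq_mul]
  ring

theorem Dt_eq_zero_and_mem_of_mem_spectralGenerators {f : Rts} {g : Sy}
    (hg : g ∈ spectralGenerators f) (hne : g ≠ X 1 ^ 2 - C f * X 2) :
    (∀ j, Dt j g = 0) ∧ ∀ j : Fin 2, X 2 * pderiv j.succ g ∈ Ideal.span (spectralGenerators f) := by
  have h21 : (X 2 * X 1 : Sy) ∈ Ideal.span (spectralGenerators f) :=
    mul_comm (X 1 : Sy) (X 2) ▸ Ideal.subset_span (by simp [spectralGenerators])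
  have h22 : (X 2 * X 2 : Sy) ∈ Ideal.span (spectralGenerators f) :=
    sq (X 2 : Sy) ▸ Ideal.subset_span (by simp [spectralGenerators])
  simp only [spectralGenerators, Set.mem_insert_iff, Set.mem_singleton_iff] at hg
  rcases hg with rfl | rfl | rfl | rfl
  · simp [Dt_eq_mvPolynomialMapCoeffs]
  · exact absurd rfl hne
  · simp [Dt_eq_mvPolynomialMapCoeffs, Fin.forall_fin_two, pderiv_X, h21, h22]
  · simp [Dt_eq_mvPolynomialMapCoeffs, Fin.forall_fin_two, pderiv_X, mul_left_comm (X 2 : Sy) 2,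
      Ideal.mul_mem_left _ 2 h22]

theorem poisson_mem_span_of_ne {f : Rts} {g : Sy} (hg : g ∈ spectralGenerators f)
    (hne : g ≠ X 1 ^ 2 - C f * X 2) :
    poisson (X 1 ^ 2 - C f * X 2) g ∈ Ideal.span (spectralGenerators f) := by
  obtain ⟨hDt, hmem⟩ := Dt_eq_zero_and_mem_of_mem_spectralGenerators hg hne
  rw [poisson_eq_sum_of_Dt_eq_zero hDt]
  refine Ideal.sum_mem _ fun j _ => ?_
  rw [Dt_spectralGenerator, mul_assoc]
  exact Ideal.mul_mem_left _ _ (hmem j)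

theorem poisson_mem_span_of_mem_spectralGenerators {f : Rts} {x y : Sy}
    (hx : x ∈ spectralGenerators f) (hy : y ∈ spectralGenerators f) :
    poisson x y ∈ Ideal.span (spectralGenerators f) := by
  by_cases hx₂ : x = X 1 ^ 2 - C f * X 2 <;> by_cases hy₂ : y = X 1 ^ 2 - C f * X 2
  · rw [hx₂, hy₂, poisson_self]
    exact zero_mem _
  · rw [hx₂]
    exact poisson_mem_span_of_ne hy hy₂
  · rw [hy₂, poisson_swap]
    exact neg_mem (poisson_mem_span_of_ne hx hx₂)
  · have hDt := (Dt_eq_zero_and_mem_of_mem_spectralGenerators hx hx₂).1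
    rw [poisson_eq_sum_of_Dt_eq_zero (Dt_eq_zero_and_mem_of_mem_spectralGenerators hy hy₂).1]
    simp [hDt]

end Poisson

open MvPolynomial in
/-- For `M = ℂ³` with unit `e = ∂₁` and `∂₂∘∂₂ = f·∂₃`, `∂₂∘∂₃ = ∂₃∘∂₃ = 0`
(`f ∈ ℂ{t₂,t₃}`), the multiplication is associative and the spectral ideal
`I = (y₁ − 1, y₂² − f·y₃, y₂y₃, y₃²)` is closed under the Poisson bracket, so
`(M,∘,e)` is an `F`-manifold. -/
theorem fMul_assoc_and_poisson_closed (f : Rts) :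
    (∀ x y z : Rts × Rts × Rts, fMul f (fMul f x y) z = fMul f x (fMul f y z)) ∧
    (∀ g ∈ Ideal.span {(X 0 : Sy) - 1, (X 1 : Sy) ^ 2 - C f * X 2,
        (X 1 : Sy) * X 2, (X 2 : Sy) ^ 2},
     ∀ g' ∈ Ideal.span {(X 0 : Sy) - 1, (X 1 : Sy) ^ 2 - C f * X 2,
        (X 1 : Sy) * X 2, (X 2 : Sy) ^ 2},
       poisson g g' ∈ Ideal.span {(X 0 : Sy) - 1, (X 1 : Sy) ^ 2 - C f * X 2,
        (X 1 : Sy) * X 2, (X 2 : Sy) ^ 2}) :=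
  ⟨fMul_assoc f, fun _ hg _ hg' =>
    Ideal.bracket_mem_span_of_leibniz poisson poisson_add_left poisson_add_right
      poisson_mul_left poisson_mul_right
      (fun _ hx _ hy => poisson_mem_span_of_mem_spectralGenerators hx hy) hg hg'⟩

end
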